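/- arXiv:2510.23720 — 5 statements merged into one kernel-verified Lean document; each statement's English description precedes it below -/
import Mathlib

section
/- Define the coolness function β_{[a,b]}(x) = 2·sin((x−a)/2)·sin((b−x)/2)/sin((b−a)/2) for x ∈ [a,b] ⊂ (0,2π) with 0 < b − a < 2π, and 0 otherwise. Then its Fourier coefficient λ_n = ∫_0^{2π} β_{[a,b]}(x) e^{−inx} dx equals (2 e^{−in(a+b)/2}/(n³−n))·[cot((b−a)/2)·sin(n(b−a)/2) − n·cos(n(b−a)/2)] for all integers n with |n| ≥ 2. -/
open Real Complex intervalIntegral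

set_option maxHeartbeats 2000000

lemma cos_exp_def (z : ℂ) : Complex.cos z = (Complex.exp (z * I) + Complex.exp (-z * I)) / 2 := rfl
lemma sin_exp_def (z : ℂ) : Complex.sin z = (Complex.exp (-z * I) - Complex.exp (z * I)) * I / 2 := rfl
lemma expand1 (s t r : ℂ) (h : r = s + t) : Complex.exp r = Complex.exp s * Complex.exp t := by
  rw [h, Complex.exp_add]

lemma aux1 (X s c : ℂ) : X / (2 * (s * Complex.I / 2) * (c * Complex.I)) = -X / (s * c) := by
  rw [show 2 * (s * Complex.I / 2) * (c * Complex.I) = -(s * c) from by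
    linear_combination (s * c) * Complex.I_mul_I, div_neg, neg_div]

lemma aux3 (X s m : ℂ) : X / (s * Complex.I / 2 * (-m * Complex.I)) = 2 * X / (s * m) := by
  rw [show s * Complex.I / 2 * (-m * Complex.I) = s * m / 2 from by
    linear_combination (-(s * m) / 2) * Complex.I_mul_I, div_div_eq_mul_div, mul_comm X 2]


/-- The coolness function `β_{[a,b]}`: equal to
`2 sin((x-a)/2) sin((b-x)/2) / sin((b-a)/2)` for `x ∈ (a,b)` and `0` otherwise. -/
noncomputable def coolness (a b x : ℝ) : ℝ :=
  if a < x ∧ x < b then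
    2 * Real.sin ((x - a) / 2) * Real.sin ((b - x) / 2) / Real.sin ((b - a) / 2)
  else 0

/-- For `0 < a < b < 2π` and any integer `n` with `|n| ≥ 2`, the Fourier coefficient
`λ_n = ∫_0^{2π} β_{[a,b]}(x) e^{-inx} dx` equals
`(2 e^{-in(a+b)/2}/(n³-n)) [cot((b-a)/2) sin(n(b-a)/2) - n cos(n(b-a)/2)]`. -/
theorem coolness_fourier_coeff (a b : ℝ) (ha : 0 < a) (hab : a < b) (hb : b < 2 * π)
    (n : ℤ) (hn : 2 ≤ |n|) :
    ∫ x in (0 : ℝ)..(2 * π), (coolness a b x : ℂ) * Complex.exp (-Complex.I * n * x) =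
      (2 * Complex.exp (-Complex.I * n * ((a + b) / 2)) / ((n : ℂ) ^ 3 - n)) *
        (((Real.cos ((b - a) / 2) / Real.sin ((b - a) / 2)) *
            Real.sin (n * (b - a) / 2) - n * Real.cos (n * (b - a) / 2) : ℝ) : ℂ) := by
  have hπ : (0:ℝ) < π := Real.pi_pos
  have hd0 : 0 < (b - a) / 2 := by linarith
  have hdπ : (b - a) / 2 < π := by linarith
  have hs0 : Real.sin ((b - a) / 2) ≠ 0 :=
    ne_of_gt (Real.sin_pos_of_pos_of_lt_pi hd0 hdπ)
  have hn0' : n ≠ 0 := by rintro rfl; norm_num at hn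
  have hn1' : n ≠ 1 := by rintro rfl; norm_num at hn
  have hnm1' : n ≠ -1 := by rintro rfl; norm_num at hn
  have hn0 : (n:ℂ) ≠ 0 := Int.cast_ne_zero.mpr hn0'
  have hn1 : (n:ℂ) ≠ 1 := by exact_mod_cast hn1'
  have hnm1 : (n:ℂ) ≠ -1 := by exact_mod_cast hnm1'
  have hc1 : ((1:ℂ) - n) * Complex.I ≠ 0 :=
    mul_ne_zero (by intro h; apply hn1; linear_combination -h) Complex.I_ne_zero
  have hc2 : ((-1:ℂ) - n) * Complex.I ≠ 0 :=
    mul_ne_zero (by intro h; apply hnm1; linear_combination -h) Complex.I_ne_zero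
  have hc3 : -(n:ℂ) * Complex.I ≠ 0 := mul_ne_zero (neg_ne_zero.mpr hn0) Complex.I_ne_zero
  -- the real identity
  have hreal : ∀ x : ℝ, a ≤ x → x ≤ b →
      coolness a b x = (Real.cos (x - (a+b)/2) - Real.cos ((b-a)/2)) / Real.sin ((b-a)/2) := by
    intro x h1 h2
    have key2 : Real.cos (x - (a+b)/2) - Real.cos ((b-a)/2)
        = 2 * Real.sin ((x - a)/2) * Real.sin ((b - x)/2) := by
      rw [Real.cos_sub_cos]
      rw [show (x - (a+b)/2 + (b-a)/2)/2 = (x - a)/2 by ring]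
      rw [show (x - (a+b)/2 - (b-a)/2)/2 = -((b - x)/2) by ring]
      rw [Real.sin_neg]; ring
    unfold coolness
    by_cases h : a < x ∧ x < b
    · rw [if_pos h, key2]
    · rw [if_neg h]
      have hx : x = a ∨ x = b := by
        rcases h1.lt_or_eq with h1' | h1'
        · rcases h2.lt_or_eq with h2' | h2'
          · exact absurd ⟨h1', h2'⟩ h
          · exact Or.inr h2'
        · exact Or.inl h1'.symm
      rcases hx with rfl | rfl
      · rw [show x - (x+b)/2 = -((b-x)/2) by ring, Real.cos_neg, sub_self, zero_div]
      · rw [show x - (a+x)/2 = (x-a)/2 by ring, sub_self, zero_div]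
  set g : ℝ → ℂ := fun x =>
      Complex.exp (-(((a:ℂ)+b)/2) * Complex.I) / (2 * ((Real.sin ((b-a)/2) : ℝ) : ℂ)) *
        Complex.exp ((1 - (n:ℂ)) * Complex.I * x)
    + Complex.exp ((((a:ℂ)+b)/2) * Complex.I) / (2 * ((Real.sin ((b-a)/2) : ℝ) : ℂ)) *
        Complex.exp ((-1 - (n:ℂ)) * Complex.I * x)
    - (((Real.cos ((b-a)/2) : ℝ) : ℂ) / ((Real.sin ((b-a)/2) : ℝ) : ℂ)) *
        Complex.exp (-(n:ℂ) * Complex.I * x) with hg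
  have hpt : ∀ x : ℝ, (coolness a b x : ℂ) * Complex.exp (-Complex.I * n * x)
      = Set.indicator (Set.Ioc a b) g x := by
    intro x
    by_cases hx : x ∈ Set.Ioc a b
    · rw [Set.indicator_of_mem hx, hg, hreal x hx.1.le hx.2]
      simp only
      rw [Complex.ofReal_div, Complex.ofReal_sub, Complex.ofReal_cos,
        show ((x - (a+b)/2 : ℝ) : ℂ) = (x:ℂ) - ((a:ℂ)+b)/2 by push_cast; ring,
        cos_exp_def]
      rw [expand1 ((x:ℂ)*I) (-((((a:ℂ)+b)/2)*I)) (((x:ℂ) - ((a:ℂ)+b)/2) * I) (by ring)]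
      rw [expand1 (-((x:ℂ)*I)) ((((a:ℂ)+b)/2)*I) (-(((x:ℂ) - ((a:ℂ)+b)/2)) * I) (by ring)]
      rw [show -Complex.I*(n:ℂ)*(x:ℂ) = -((n:ℂ)*Complex.I*(x:ℂ)) by ring]
      rw [expand1 ((x:ℂ)*I) (-((n:ℂ)*Complex.I*x)) ((1 - (n:ℂ)) * Complex.I * x) (by ring)]
      rw [expand1 (-((x:ℂ)*I)) (-((n:ℂ)*Complex.I*x)) ((-1 - (n:ℂ)) * Complex.I * x) (by ring)]
      rw [show -(n:ℂ) * Complex.I * (x:ℂ) = -((n:ℂ)*Complex.I*(x:ℂ)) by ring]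
      rw [show -(((a:ℂ)+b)/2) * Complex.I = -((((a:ℂ)+b)/2) * Complex.I) by ring]
      ring
    · rw [Set.indicator_of_notMem hx]
      have h' : ¬(a < x ∧ x < b) := by
        intro ⟨u1, u2⟩; exact hx ⟨u1, u2.le⟩
      simp [coolness, h']
  have step1 : ∫ x in (0:ℝ)..(2*π), (coolness a b x : ℂ) * Complex.exp (-Complex.I * n * x)
      = ∫ x in a..b, g x := by
    rw [intervalIntegral.integral_congr (g := fun x => Set.indicator (Set.Ioc a b) g x)
      (fun x _ => hpt x)]
    rw [intervalIntegral.integral_of_le (by linarith : (0:ℝ) ≤ 2*π),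
      MeasureTheory.setIntegral_indicator measurableSet_Ioc,
      Set.inter_eq_self_of_subset_right (Set.Ioc_subset_Ioc ha.le hb.le),
      ← intervalIntegral.integral_of_le hab.le]
  rw [step1, hg]
  have i1 : IntervalIntegrable (fun x : ℝ =>
      Complex.exp (-(((a:ℂ)+b)/2) * Complex.I) / (2 * ((Real.sin ((b-a)/2) : ℝ) : ℂ)) *
        Complex.exp ((1 - (n:ℂ)) * Complex.I * x)) MeasureTheory.volume a b := by
    apply Continuous.intervalIntegrable; fun_prop
  have i2 : IntervalIntegrable (fun x : ℝ =>
      Complex.exp ((((a:ℂ)+b)/2) * Complex.I) / (2 * ((Real.sin ((b-a)/2) : ℝ) : ℂ)) *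
        Complex.exp ((-1 - (n:ℂ)) * Complex.I * x)) MeasureTheory.volume a b := by
    apply Continuous.intervalIntegrable; fun_prop
  have i3 : IntervalIntegrable (fun x : ℝ =>
      (((Real.cos ((b-a)/2) : ℝ) : ℂ) / ((Real.sin ((b-a)/2) : ℝ) : ℂ)) *
        Complex.exp (-(n:ℂ) * Complex.I * x)) MeasureTheory.volume a b := by
    apply Continuous.intervalIntegrable; fun_prop
  rw [intervalIntegral.integral_sub (i1.add i2) i3, intervalIntegral.integral_add i1 i2,
    intervalIntegral.integral_const_mul, intervalIntegral.integral_const_mul,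
    intervalIntegral.integral_const_mul,
    integral_exp_mul_complex hc1, integral_exp_mul_complex hc2, integral_exp_mul_complex hc3]
  push_cast
  simp only [sin_exp_def, cos_exp_def]
  rw [div_mul_div_comm, div_mul_div_comm, div_mul_div_comm, mul_sub, mul_sub, mul_sub]
  rw [show cexp (-(((a:ℂ) + b) / 2) * Complex.I) * cexp ((1 - (n:ℂ)) * Complex.I * b)
      = cexp (((b:ℂ) - a) / 2 * Complex.I) * (cexp (-Complex.I * (n:ℂ) * (((a:ℂ) + b) / 2)) *
          cexp (-((n:ℂ) * ((b:ℂ) - a) / 2) * Complex.I)) from by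
    rw [← Complex.exp_add, ← Complex.exp_add, ← Complex.exp_add]; congr 1; ring]
  rw [show cexp (-(((a:ℂ) + b) / 2) * Complex.I) * cexp ((1 - (n:ℂ)) * Complex.I * a)
      = cexp (-(((b:ℂ) - a) / 2) * Complex.I) * (cexp (-Complex.I * (n:ℂ) * (((a:ℂ) + b) / 2)) *
          cexp ((n:ℂ) * ((b:ℂ) - a) / 2 * Complex.I)) from by
    rw [← Complex.exp_add, ← Complex.exp_add, ← Complex.exp_add]; congr 1; ring]
  rw [show cexp ((((a:ℂ) + b) / 2) * Complex.I) * cexp ((-1 - (n:ℂ)) * Complex.I * b)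
      = cexp (-(((b:ℂ) - a) / 2) * Complex.I) * (cexp (-Complex.I * (n:ℂ) * (((a:ℂ) + b) / 2)) *
          cexp (-((n:ℂ) * ((b:ℂ) - a) / 2) * Complex.I)) from by
    rw [← Complex.exp_add, ← Complex.exp_add, ← Complex.exp_add]; congr 1; ring]
  rw [show cexp ((((a:ℂ) + b) / 2) * Complex.I) * cexp ((-1 - (n:ℂ)) * Complex.I * a)
      = cexp (((b:ℂ) - a) / 2 * Complex.I) * (cexp (-Complex.I * (n:ℂ) * (((a:ℂ) + b) / 2)) *
          cexp ((n:ℂ) * ((b:ℂ) - a) / 2 * Complex.I)) from by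
    rw [← Complex.exp_add, ← Complex.exp_add, ← Complex.exp_add]; congr 1; ring]
  rw [show cexp (-(n:ℂ) * Complex.I * (b:ℂ))
      = cexp (-Complex.I * (n:ℂ) * (((a:ℂ) + b) / 2)) * cexp (-((n:ℂ) * ((b:ℂ) - a) / 2) * Complex.I) from by
    rw [← Complex.exp_add]; congr 1; ring]
  rw [show cexp (-(n:ℂ) * Complex.I * (a:ℂ))
      = cexp (-Complex.I * (n:ℂ) * (((a:ℂ) + b) / 2)) * cexp ((n:ℂ) * ((b:ℂ) - a) / 2 * Complex.I) from by
    rw [← Complex.exp_add]; congr 1; ring]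
  have hsC : Complex.sin (((b:ℂ) - a) / 2) ≠ 0 := by
    rw [show ((b:ℂ) - a) / 2 = ((((b - a) / 2 : ℝ)) : ℂ) by push_cast; ring, ← Complex.ofReal_sin]
    exact Complex.ofReal_ne_zero.mpr hs0
  have hdiff : cexp (-(((b:ℂ) - a) / 2) * Complex.I) - cexp (((b:ℂ) - a) / 2 * Complex.I) ≠ 0 := by
    intro h
    apply hsC
    rw [sin_exp_def, h, zero_mul, zero_div]
  have hn3 : (n:ℂ) ^ 3 - n ≠ 0 := by
    rw [show (n:ℂ)^3 - n = n * (n - 1) * (n + 1) by ring]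
    exact mul_ne_zero (mul_ne_zero hn0 (sub_ne_zero.mpr hn1))
      (by intro h; apply hnm1; linear_combination h)
  set p := cexp (((b:ℂ) - a) / 2 * Complex.I) with hpd
  set p' := cexp (-(((b:ℂ) - a) / 2) * Complex.I) with hpd'
  set q := cexp ((n:ℂ) * ((b:ℂ) - a) / 2 * Complex.I) with hqd
  set q' := cexp (-((n:ℂ) * ((b:ℂ) - a) / 2) * Complex.I) with hqd'
  set W := cexp (-Complex.I * (n:ℂ) * (((a:ℂ) + b) / 2)) with hWd
  clear_value p p' q q' W
  rw [aux1, aux1, aux3]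
  rw [show (p + p') / 2 / ((p' - p) * Complex.I / 2) * ((q' - q) * Complex.I / 2)
      = (p + p') * (q' - q) / (2 * (p' - p)) from by
    rw [div_mul_eq_mul_div, div_eq_div_iff
      (div_ne_zero (mul_ne_zero hdiff Complex.I_ne_zero) two_ne_zero)
      (mul_ne_zero two_ne_zero hdiff)]
    ring]
  set s := p' - p with hs
  set m1 := (1:ℂ) - (n:ℂ) with hm1
  set m2 := (-1:ℂ) - (n:ℂ) with hm2
  set m3 := (n:ℂ)^3 - (n:ℂ) with hm3
  have hm1ne : m1 ≠ 0 := by rw [hm1]; intro h; apply hn1; linear_combination -h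
  have hm2ne : m2 ≠ 0 := by rw [hm2]; intro h; apply hnm1; linear_combination -h
  have hm3ne : m3 ≠ 0 := by rw [hm3]; exact hn3
  clear_value s m1 m2 m3
  field_simp [hdiff, hm1ne, hm2ne, hn0, hm3ne]
  rw [hs, hm1, hm2, hm3]
  ring
end

section
/- With β_{[a,b]}(x) = 2·𝟙_{(a,b)}(x)·sin((x−a)/2)·sin((b−x)/2)/sin((b−a)/2), the zeroth Fourier coefficient satisfies ∫_0^{2π} β_{[a,b]}(x) dx = 2 − (b−a)·cot((b−a)/2). -/
open Real intervalIntegral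

/-- For `0 < a < b < 2π`, the zeroth Fourier coefficient of the coolness function is
`∫_0^{2π} β_{[a,b]}(x) dx = 2 - (b-a) cot((b-a)/2)`. -/
theorem coolness_zeroth_fourier_coeff (a b : ℝ) (ha : 0 < a) (hab : a < b)
    (hb : b < 2 * π) :
    ∫ x in (0 : ℝ)..(2 * π), coolness a b x =
      2 - (b - a) * (Real.cos ((b - a) / 2) / Real.sin ((b - a) / 2)) := by
  have hs : Real.sin ((b - a) / 2) ≠ 0 := by
    refine ne_of_gt (Real.sin_pos_of_pos_of_lt_pi (by linarith) (by linarith))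
  set g : ℝ → ℝ := fun x =>
    (Real.cos (x - (a + b) / 2) - Real.cos ((b - a) / 2)) / Real.sin ((b - a) / 2) with hg
  have hgc : Continuous g := by fun_prop
  have key : ∀ x : ℝ, 2 * Real.sin ((x - a) / 2) * Real.sin ((b - x) / 2) =
      Real.cos (x - (a + b) / 2) - Real.cos ((b - a) / 2) := by
    intro x
    rw [show x - (a + b) / 2 = (x - a) / 2 - (b - x) / 2 by ring,
      show (b - a) / 2 = (x - a) / 2 + (b - x) / 2 by ring,
      Real.cos_sub, Real.cos_add]
    ring
  -- coolness vanishes on [0,a]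
  have e1 : Set.EqOn (coolness a b) (fun _ => (0 : ℝ)) (Set.uIcc 0 a) := by
    intro x hx
    rw [Set.uIcc_of_le ha.le] at hx
    simp only [coolness]
    rw [if_neg]
    rintro ⟨h', -⟩; exact absurd hx.2 (not_le.mpr h')
  have e3 : Set.EqOn (coolness a b) (fun _ => (0 : ℝ)) (Set.uIcc b (2 * π)) := by
    intro x hx
    rw [Set.uIcc_of_le hb.le] at hx
    simp only [coolness]
    rw [if_neg]
    rintro ⟨-, h'⟩; exact absurd hx.1 (not_le.mpr h')
  have e2 : Set.EqOn (coolness a b) g (Set.uIcc a b) := by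
    intro x hx
    rw [Set.uIcc_of_le hab.le] at hx
    simp only [coolness, hg]
    by_cases h : a < x ∧ x < b
    · rw [if_pos h, key]
    · rw [if_neg h]
      have hx' : x = a ∨ x = b := by
        rcases lt_or_eq_of_le hx.1 with h1' | h1'
        · rcases lt_or_eq_of_le hx.2 with h2' | h2'
          · exact absurd ⟨h1', h2'⟩ h
          · exact Or.inr h2'
        · exact Or.inl h1'.symm
      rcases hx' with rfl | rfl
      · rw [show x - (x + b) / 2 = -((b - x) / 2) by ring, Real.cos_neg]
        simp
      · rw [show x - (a + x) / 2 = (x - a) / 2 by ring]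
        simp
  have ic1 : IntervalIntegrable (coolness a b) MeasureTheory.volume 0 a :=
    (continuousOn_const.congr e1).intervalIntegrable
  have ic2 : IntervalIntegrable (coolness a b) MeasureTheory.volume a b :=
    (hgc.continuousOn.congr e2).intervalIntegrable
  have ic3 : IntervalIntegrable (coolness a b) MeasureTheory.volume b (2 * π) :=
    (continuousOn_const.congr e3).intervalIntegrable
  have h1 : ∫ x in (0 : ℝ)..a, coolness a b x = 0 := by
    rw [intervalIntegral.integral_congr e1, intervalIntegral.integral_zero]
  have h3 : ∫ x in b..(2 * π), coolness a b x = 0 := by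
    rw [intervalIntegral.integral_congr e3, intervalIntegral.integral_zero]
  have h2 : ∫ x in a..b, coolness a b x = ∫ x in a..b, g x :=
    intervalIntegral.integral_congr e2
  have split : ∫ x in (0 : ℝ)..(2 * π), coolness a b x =
      (∫ x in (0 : ℝ)..a, coolness a b x) + (∫ x in a..b, coolness a b x)
        + (∫ x in b..(2 * π), coolness a b x) := by
    rw [intervalIntegral.integral_add_adjacent_intervals ic1 ic2,
      intervalIntegral.integral_add_adjacent_intervals (ic1.trans ic2) ic3]
  rw [split, h1, h2, h3, zero_add, add_zero]
  have hcos : ∫ x in a..b, Real.cos (x - (a + b) / 2) = 2 * Real.sin ((b - a) / 2) := by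
    rw [intervalIntegral.integral_comp_sub_right (fun x => Real.cos x) ((a + b) / 2),
      integral_cos]
    rw [show a - (a + b) / 2 = -((b - a) / 2) by ring, show b - (a + b) / 2 = (b - a) / 2 by ring,
      Real.sin_neg]
    ring
  have : ∫ x in a..b, g x =
      ((∫ x in a..b, Real.cos (x - (a + b) / 2)) - (b - a) * Real.cos ((b - a) / 2))
        / Real.sin ((b - a) / 2) := by
    simp only [hg, div_eq_mul_inv]
    rw [intervalIntegral.integral_mul_const, intervalIntegral.integral_sub
      (by apply Continuous.intervalIntegrable; fun_prop) intervalIntegrable_const,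
      intervalIntegral.integral_const, smul_eq_mul]
  rw [this, hcos]
  field_simp
end

section
/- Let β_{[a,b]}(x) = 2·sin((x−a)/2)·sin((b−x)/2)/sin((b−a)/2) for x ∈ (a,b) and 0 outside. Then for interior points x its derivative is β'_{[a,b]}(x) = sin((a+b−2x)/2)/sin((b−a)/2), and for a < c < b < d with all differences in (0,2π): β'_{[c,d]}(b) − β_{[c,d]}(b)/tan((b−a)/2) = 2η − 1, where η = sin((c−a)/2)·sin((d−b)/2)/(sin((b−a)/2)·sin((d−c)/2)). -/
open Real

/-- The claimed interior derivative of the coolness function: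
`β'_{[a,b]}(x) = sin((a+b-2x)/2) / sin((b-a)/2)`. -/
noncomputable def coolnessDeriv (a b x : ℝ) : ℝ :=
  Real.sin ((a + b - 2 * x) / 2) / Real.sin ((b - a) / 2)

/-- (1) On the interior `(a,b)` (with `0 < b - a < 2π`) the coolness function has derivative
`sin((a+b-2x)/2)/sin((b-a)/2)`; and (2) for `a < c < b < d` with `d - a < 2π`,
`β'_{[c,d]}(b) - β_{[c,d]}(b)/tan((b-a)/2) = 2η - 1` where
`η = sin((c-a)/2) sin((d-b)/2) / (sin((b-a)/2) sin((d-c)/2))`. -/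
theorem coolness_deriv_and_cross_ratio (a b c d : ℝ)
    (hac : a < c) (hcb : c < b) (hbd : b < d) (hda : d - a < 2 * π)
    (hsba : Real.sin ((b - a) / 2) ≠ 0) (hsdc : Real.sin ((d - c) / 2) ≠ 0)
    (htan : Real.tan ((b - a) / 2) ≠ 0) :
    (∀ a' b' : ℝ, 0 < b' - a' → b' - a' < 2 * π →
      ∀ x ∈ Set.Ioo a' b', HasDerivAt (coolness a' b') (coolnessDeriv a' b' x) x) ∧
    coolnessDeriv c d b - coolness c d b / Real.tan ((b - a) / 2) =
      2 * (Real.sin ((c - a) / 2) * Real.sin ((d - b) / 2) /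
        (Real.sin ((b - a) / 2) * Real.sin ((d - c) / 2))) - 1 := by
  constructor
  · intro a' b' h1 h2 x hx
    set s := Real.sin ((b' - a') / 2) with hs
    have hinner1 : HasDerivAt (fun y : ℝ => (y - a') / 2) (1 / 2) x := by
      simpa using ((hasDerivAt_id x).sub_const a').div_const 2
    have hinner2 : HasDerivAt (fun y : ℝ => (b' - y) / 2) (-1 / 2) x := by
      simpa using ((hasDerivAt_id x).const_sub b').div_const 2
    have h1d : HasDerivAt (fun y : ℝ => Real.sin ((y - a') / 2))
        (Real.cos ((x - a') / 2) * (1 / 2)) x := by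
      have := (Real.hasDerivAt_sin ((x - a') / 2)).comp x hinner1; exact this
    have h2d : HasDerivAt (fun y : ℝ => Real.sin ((b' - y) / 2))
        (Real.cos ((b' - x) / 2) * (-1 / 2)) x := by
      have := (Real.hasDerivAt_sin ((b' - x) / 2)).comp x hinner2; exact this
    have hprod : HasDerivAt
        (fun y : ℝ => 2 * Real.sin ((y - a') / 2) * Real.sin ((b' - y) / 2) / s)
        ((2 * (Real.cos ((x - a') / 2) * (1 / 2)) * Real.sin ((b' - x) / 2)
          + 2 * Real.sin ((x - a') / 2) * (Real.cos ((b' - x) / 2) * (-1 / 2))) / s) x :=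
      ((h1d.const_mul 2).mul h2d).div_const s
    have heq : (2 * (Real.cos ((x - a') / 2) * (1 / 2)) * Real.sin ((b' - x) / 2)
          + 2 * Real.sin ((x - a') / 2) * (Real.cos ((b' - x) / 2) * (-1 / 2))) / s
        = coolnessDeriv a' b' x := by
      unfold coolnessDeriv
      rw [show (a' + b' - 2 * x) / 2 = (b' - x) / 2 - (x - a') / 2 by ring, Real.sin_sub]
      ring
    rw [heq] at hprod
    apply hprod.congr_of_eventuallyEq
    filter_upwards [IsOpen.mem_nhds isOpen_Ioo hx] with y hy
    simp [coolness, hy.1, hy.2, hs]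
  · have hcos : Real.cos ((b - a) / 2) ≠ 0 := by
      intro h
      apply htan
      simp [Real.tan_eq_sin_div_cos, h]
    have hsin : Real.sin ((b - a) / 2) ≠ 0 := hsba
    unfold coolness coolnessDeriv
    rw [if_pos ⟨hcb, hbd⟩, Real.tan_eq_sin_div_cos]
    rw [show (c + d - 2 * b) / 2 = (d - b) / 2 - (b - c) / 2 by ring,
        show (d - c) / 2 = (b - c) / 2 + (d - b) / 2 by ring,
        show (c - a) / 2 = (b - a) / 2 - (b - c) / 2 by ring,
        Real.sin_sub, Real.sin_add, Real.sin_sub]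
    have hsdc' : Real.sin ((b - c) / 2) * Real.cos ((d - b) / 2)
        + Real.cos ((b - c) / 2) * Real.sin ((d - b) / 2) ≠ 0 := by
      rw [← Real.sin_add, show (b - c) / 2 + (d - b) / 2 = (d - c) / 2 by ring]
      exact hsdc
    have hsdc'' : Real.cos ((d - b) / 2) * Real.sin ((b - c) / 2)
        + Real.sin ((d - b) / 2) * Real.cos ((b - c) / 2) ≠ 0 := by
      convert hsdc' using 1; ring
    field_simp
    ring
end

section
/- Let ρ_{ABC} be a density matrix on a tensor product Hilbert space H_A ⊗ H_B ⊗ H_C with full support, and suppose its reduced density matrices satisfy the Markov decomposition K_{ABC} = K_{AB} ⊗ 1_C + 1_A ⊗ K_{BC} − 1_A ⊗ K_B ⊗ 1_C, where K_X = −log ρ_X. Then the conditional mutual information I(A:C|B) = S_{AB} + S_{BC} − S_{ABC} − S_B equals 0. -/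
open Matrix
open scoped ComplexOrder

variable {n : Type*} [Fintype n] [DecidableEq n]

/-- Matrix logarithm of a Hermitian matrix via its spectral decomposition
(junk value `0` if the matrix is not Hermitian). -/
noncomputable def matLog (ρ : Matrix n n ℂ) : Matrix n n ℂ :=
  if h : ρ.IsHermitian then
    (h.eigenvectorUnitary : Matrix n n ℂ) *
      Matrix.diagonal (fun i => (Real.log (h.eigenvalues i) : ℂ)) *
      star (h.eigenvectorUnitary : Matrix n n ℂ)
  else 0

/-- Entanglement (modular) Hamiltonian `K = -log ρ`. -/
noncomputable def entHam (ρ : Matrix n n ℂ) : Matrix n n ℂ := -matLog ρ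

/-- Von Neumann entropy `S(ρ) = -Tr(ρ log ρ)`. -/
noncomputable def vnEntropy (ρ : Matrix n n ℂ) : ℝ := -(ρ * matLog ρ).trace.re

variable {A B C : Type*} [Fintype A] [DecidableEq A] [Fintype B] [DecidableEq B]
  [Fintype C] [DecidableEq C]

/-- Partial trace over `C` of a state on `A × B × C`. -/
noncomputable def ptrC (ρ : Matrix (A × B × C) (A × B × C) ℂ) :
    Matrix (A × B) (A × B) ℂ :=
  fun p q => ∑ c : C, ρ (p.1, p.2, c) (q.1, q.2, c)

/-- Partial trace over `A` of a state on `A × B × C`. -/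
noncomputable def ptrA (ρ : Matrix (A × B × C) (A × B × C) ℂ) :
    Matrix (B × C) (B × C) ℂ :=
  fun p q => ∑ a : A, ρ (a, p.1, p.2) (a, q.1, q.2)

/-- Partial trace over `A` and `C` of a state on `A × B × C`. -/
noncomputable def ptrAC (ρ : Matrix (A × B × C) (A × B × C) ℂ) : Matrix B B ℂ :=
  fun b b' => ∑ a : A, ∑ c : C, ρ (a, b, c) (a, b', c)

/-- Extension of an operator on `A × B` by the identity on `C`. -/
def extAB (M : Matrix (A × B) (A × B) ℂ) : Matrix (A × B × C) (A × B × C) ℂ :=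
  fun p q => if p.2.2 = q.2.2 then M (p.1, p.2.1) (q.1, q.2.1) else 0

/-- Extension of an operator on `B × C` by the identity on `A`. -/
def extBC (M : Matrix (B × C) (B × C) ℂ) : Matrix (A × B × C) (A × B × C) ℂ :=
  fun p q => if p.1 = q.1 then M (p.2.1, p.2.2) (q.2.1, q.2.2) else 0

/-- Extension of an operator on `B` by the identity on `A` and `C`. -/
def extB (M : Matrix B B ℂ) : Matrix (A × B × C) (A × B × C) ℂ :=
  fun p q => if p.1 = q.1 ∧ p.2.2 = q.2.2 then M p.2.1 q.2.1 else 0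


set_option linter.unusedSectionVars false in
lemma trace_extAB' (ρ : Matrix (A × B × C) (A × B × C) ℂ) (M : Matrix (A × B) (A × B) ℂ) :
    (ρ * extAB M).trace = (ptrC ρ * M).trace := by
  simp only [Matrix.trace, Matrix.diag, Matrix.mul_apply, extAB, ptrC,
    Fintype.sum_prod_type, mul_ite, mul_zero, Finset.sum_ite_irrel, Finset.sum_const_zero,
    Finset.sum_ite_eq, Finset.sum_ite_eq', Finset.mem_univ, if_true, Finset.sum_mul]
  refine Finset.sum_congr rfl fun a _ => Finset.sum_congr rfl fun b _ => ?_
  rw [Finset.sum_comm]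
  refine Finset.sum_congr rfl fun a' _ => ?_
  rw [Finset.sum_comm]

set_option linter.unusedSectionVars false in
lemma trace_extBC' (ρ : Matrix (A × B × C) (A × B × C) ℂ) (M : Matrix (B × C) (B × C) ℂ) :
    (ρ * extBC M).trace = (ptrA ρ * M).trace := by
  simp only [Matrix.trace, Matrix.diag, Matrix.mul_apply, extBC, ptrA,
    Fintype.sum_prod_type, mul_ite, mul_zero, Finset.sum_ite_irrel, Finset.sum_const_zero,
    Finset.sum_ite_eq, Finset.sum_ite_eq', Finset.mem_univ, if_true, Finset.sum_mul]
  rw [Finset.sum_comm]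
  refine Finset.sum_congr rfl fun b _ => ?_
  rw [Finset.sum_comm]
  refine Finset.sum_congr rfl fun c _ => ?_
  rw [Finset.sum_comm]
  refine Finset.sum_congr rfl fun b' _ => ?_
  rw [Finset.sum_comm]

set_option linter.unusedSectionVars false in
lemma trace_extB' (ρ : Matrix (A × B × C) (A × B × C) ℂ) (M : Matrix B B ℂ) :
    (ρ * extB M).trace = (ptrAC ρ * M).trace := by
  simp only [Matrix.trace, Matrix.diag, Matrix.mul_apply, extB, ptrAC,
    Fintype.sum_prod_type, ite_and, mul_ite, mul_zero, Finset.sum_ite_irrel, Finset.sum_const_zero,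
    Finset.sum_ite_eq, Finset.sum_ite_eq', Finset.mem_univ, if_true, Finset.sum_mul]
  rw [Finset.sum_comm]
  refine Finset.sum_congr rfl fun b _ => ?_
  symm
  rw [Finset.sum_comm]
  refine Finset.sum_congr rfl fun a _ => ?_
  rw [Finset.sum_comm]

lemma vnEntropy_eq_trace_entHam {n : Type*} [Fintype n] [DecidableEq n]
    (ρ : Matrix n n ℂ) : vnEntropy ρ = (ρ * entHam ρ).trace.re := by
  simp [vnEntropy, entHam, Matrix.mul_neg, Matrix.trace_neg, Complex.neg_re]

/-- If a full-support density matrix `ρ_{ABC}` satisfies the Markov decomposition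
`K_{ABC} = K_{AB} ⊗ 1_C + 1_A ⊗ K_{BC} - 1_A ⊗ K_B ⊗ 1_C` of its modular
Hamiltonians `K_X = -log ρ_X`, then `I(A:C|B) = S_{AB} + S_{BC} - S_{ABC} - S_B = 0`. -/
theorem cmi_zero_of_markov_decomposition (ρ : Matrix (A × B × C) (A × B × C) ℂ)
    (hρ : ρ.PosDef) (htr : ρ.trace = 1)
    (hMarkov : entHam ρ =
      extAB (entHam (ptrC ρ)) + extBC (entHam (ptrA ρ)) - extB (entHam (ptrAC ρ))) :
    vnEntropy (ptrC ρ) + vnEntropy (ptrA ρ) - vnEntropy ρ - vnEntropy (ptrAC ρ) = 0 := by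
  have h1 : (ρ * entHam ρ).trace =
      (ptrC ρ * entHam (ptrC ρ)).trace + (ptrA ρ * entHam (ptrA ρ)).trace -
        (ptrAC ρ * entHam (ptrAC ρ)).trace := by
    rw [hMarkov, Matrix.mul_sub, Matrix.mul_add, Matrix.trace_sub, Matrix.trace_add,
      trace_extAB', trace_extBC', trace_extB']
  rw [vnEntropy_eq_trace_entHam, vnEntropy_eq_trace_entHam, vnEntropy_eq_trace_entHam,
    vnEntropy_eq_trace_entHam, h1, Complex.sub_re, Complex.add_re]
  ring
end

section
/- Let |Ψ⟩ be a pure state on H_D ⊗ H_{D̄}, K_D = −log ρ_D, and suppose L is a Hermitian operator supported on H_D with (K_D − L)|Ψ⟩ = −γ|Ψ⟩ for a real constant γ, and L commutes with every operator supported on H_{D̄}. Then for every natural number n, K_D^n |Ψ⟩ = (L − γ)^n |Ψ⟩. -/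
open Matrix
open scoped ComplexOrder Kronecker

variable {n : Type*} [Fintype n] [DecidableEq n]

variable {D E : Type*} [Fintype D] [DecidableEq D] [Fintype E] [DecidableEq E]

/-- Reduced density matrix on `D` of a pure state `Ψ` on `D × E`. -/
noncomputable def rhoD (Ψ : D × E → ℂ) : Matrix D D ℂ :=
  fun d d' => ∑ e : E, Ψ (d, e) * star (Ψ (d', e))

namespace EntHamAux

open Polynomial

lemma pow_conj_good {R : Type*} [Ring R] (U V A : R) (h : V * U = 1) (hUV : U * V = 1) :
    ∀ k : ℕ, (U * A * V) ^ k = U * A ^ k * V := fun k => by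
  have h' : ∀ x : R, V * (U * x) = x := fun x => by rw [← mul_assoc, h, one_mul]
  induction k with
  | zero => simp [hUV]
  | succ k ih =>
    rw [pow_succ, ih, pow_succ]
    simp [mul_assoc, h']

lemma aeval_conj (U V A : Matrix n n ℂ) (h : V * U = 1) (hUV : U * V = 1) (q : ℂ[X]) :
    aeval (U * A * V) q = U * aeval A q * V := by
  rw [aeval_eq_sum_range, aeval_eq_sum_range, Finset.mul_sum, Finset.sum_mul]
  refine Finset.sum_congr rfl fun i _ => ?_
  rw [pow_conj_good U V A h hUV i, mul_smul_comm, smul_mul_assoc]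

lemma aeval_diagonal (d : n → ℂ) (q : ℂ[X]) :
    aeval (Matrix.diagonal d) q = Matrix.diagonal (fun i => q.eval (d i)) := by
  have h1 : Matrix.diagonal d = Matrix.diagonalAlgHom ℂ d := rfl
  rw [h1, Polynomial.aeval_algHom_apply]
  ext i j
  have := Polynomial.aeval_algHom_apply (Pi.evalAlgHom ℂ (fun _ : n => ℂ) i) d q
  simp only [Pi.evalAlgHom_apply] at this
  by_cases hij : i = j
  · subst hij
    change Matrix.diagonal ((aeval d) q) i i = _
    simp [Matrix.diagonalAlgHom, Matrix.diagonal_apply_eq, ← this]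
  · change Matrix.diagonal ((aeval d) q) i j = _
    simp [Matrix.diagonalAlgHom, Matrix.diagonal_apply_ne _ hij, hij]

lemma exists_poly_matLog (ρ : Matrix n n ℂ) (h : ρ.IsHermitian) :
    ∃ q : ℂ[X], aeval ρ q = matLog ρ := by
  classical
  set s : Finset ℂ := Finset.univ.image (fun i => ((h.eigenvalues i : ℝ) : ℂ)) with hs
  set f : ℂ → ℂ := fun z => (Real.log z.re : ℂ) with hf
  refine ⟨Lagrange.interpolate s id f, ?_⟩
  have hU1 : star (h.eigenvectorUnitary : Matrix n n ℂ) * (h.eigenvectorUnitary : Matrix n n ℂ) = 1 :=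
    (Unitary.mem_iff.mp h.eigenvectorUnitary.2).1
  have hU2 : (h.eigenvectorUnitary : Matrix n n ℂ) * star (h.eigenvectorUnitary : Matrix n n ℂ) = 1 :=
    (Unitary.mem_iff.mp h.eigenvectorUnitary.2).2
  have hρ : ρ = (h.eigenvectorUnitary : Matrix n n ℂ) *
      Matrix.diagonal (RCLike.ofReal ∘ h.eigenvalues) * star (h.eigenvectorUnitary : Matrix n n ℂ) :=
    h.spectral_theorem
  conv_lhs => rw [hρ, mul_assoc]
  rw [show (h.eigenvectorUnitary : Matrix n n ℂ) *
      (Matrix.diagonal (RCLike.ofReal ∘ h.eigenvalues) * star (h.eigenvectorUnitary : Matrix n n ℂ)) =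
      (h.eigenvectorUnitary : Matrix n n ℂ) * Matrix.diagonal (RCLike.ofReal ∘ h.eigenvalues) *
        star (h.eigenvectorUnitary : Matrix n n ℂ) from (mul_assoc _ _ _).symm]
  rw [aeval_conj _ _ _ hU1 hU2, aeval_diagonal]
  have hdiag : (fun i => Polynomial.eval ((RCLike.ofReal ∘ h.eigenvalues) i)
      ((Lagrange.interpolate s id) f)) = (fun i => (Real.log (h.eigenvalues i) : ℂ)) := by
    funext i
    have hmem : ((h.eigenvalues i : ℝ) : ℂ) ∈ s := by
      rw [hs]; exact Finset.mem_image_of_mem _ (Finset.mem_univ i)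
    have hnode := Lagrange.eval_interpolate_at_node f (Set.injOn_id _) hmem
    simp only [id] at hnode
    have hcast : ((RCLike.ofReal ∘ h.eigenvalues) i : ℂ) = ((h.eigenvalues i : ℝ) : ℂ) := rfl
    rw [hcast, hnode]
    simp [hf]
  rw [hdiag]
  unfold matLog
  rw [dif_pos h]

lemma kron_left (Ψ : D × E → ℂ) (A : Matrix D D ℂ) :
    (A ⊗ₖ (1 : Matrix E E ℂ)) *ᵥ Ψ =
      fun p : D × E => (A * Matrix.of (fun d e => Ψ (d, e))) p.1 p.2 := by
  funext p
  obtain ⟨d, e⟩ := p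
  simp only [Matrix.mulVec, dotProduct, Matrix.mul_apply, Matrix.kroneckerMap_apply,
    Fintype.sum_prod_type, Matrix.one_apply, Matrix.of_apply, mul_ite, mul_one, mul_zero,
    ite_mul, zero_mul]
  refine Finset.sum_congr rfl fun d' _ => ?_
  simp

lemma kron_right (Ψ : D × E → ℂ) (B : Matrix E E ℂ) :
    ((1 : Matrix D D ℂ) ⊗ₖ B) *ᵥ Ψ =
      fun p : D × E => (Matrix.of (fun d e => Ψ (d, e)) * Bᵀ) p.1 p.2 := by
  funext p
  obtain ⟨d, e⟩ := p
  simp only [Matrix.mulVec, dotProduct, Matrix.mul_apply, Matrix.kroneckerMap_apply,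
    Fintype.sum_prod_type, Matrix.one_apply, Matrix.of_apply, Matrix.transpose_apply, mul_ite,
    mul_one, mul_zero, ite_mul, zero_mul]
  have hpull : ∀ x : D, (∑ x1 : E, if d = x then 1 * B e x1 * Ψ (x, x1) else 0) =
      if d = x then ∑ x1 : E, B e x1 * Ψ (x, x1) else 0 := by
    intro x; split <;> simp
  simp only [hpull, Finset.sum_ite_eq, Finset.mem_univ, if_true]
  exact Finset.sum_congr rfl fun x _ => mul_comm _ _

lemma pow_intertwine (A : Matrix D D ℂ) (B : Matrix E E ℂ) (ψ : Matrix D E ℂ)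
    (h : A * ψ = ψ * B) : ∀ k : ℕ, A ^ k * ψ = ψ * B ^ k := fun k => by
  induction k with
  | zero => simp
  | succ k ih =>
    rw [pow_succ, pow_succ, Matrix.mul_assoc, h, ← Matrix.mul_assoc, ih, Matrix.mul_assoc]

lemma aeval_intertwine (A : Matrix D D ℂ) (B : Matrix E E ℂ) (ψ : Matrix D E ℂ)
    (h : A * ψ = ψ * B) (q : Polynomial ℂ) :
    Polynomial.aeval A q * ψ = ψ * Polynomial.aeval B q := by
  rw [Polynomial.aeval_eq_sum_range, Polynomial.aeval_eq_sum_range, Matrix.sum_mul,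
    Matrix.mul_sum]
  refine Finset.sum_congr rfl fun i _ => ?_
  rw [Matrix.smul_mul, Matrix.mul_smul, pow_intertwine A B ψ h i]

end EntHamAux

set_option maxHeartbeats 1000000 in
/-- If `L` is a Hermitian operator supported on `H_D` (so it commutes with every operator
supported on `H_{D̄}`) with `(K_D - L)|Ψ⟩ = -γ|Ψ⟩` for a real constant `γ`, where
`K_D = -log ρ_D` has full-rank `ρ_D`, then `K_D^n |Ψ⟩ = (L - γ)^n |Ψ⟩` for all `n`. -/
theorem entHam_pow_eq_boundary_pow (Ψ : D × E → ℂ) (L : Matrix D D ℂ) (γ : ℝ)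
    (hnorm : ∑ p : D × E, Complex.normSq (Ψ p) = 1)
    (hρ : (rhoD Ψ).PosDef) (hL : L.IsHermitian)
    (hcomm : ∀ M : Matrix E E ℂ,
      (L ⊗ₖ (1 : Matrix E E ℂ)) * ((1 : Matrix D D ℂ) ⊗ₖ M) =
        ((1 : Matrix D D ℂ) ⊗ₖ M) * (L ⊗ₖ (1 : Matrix E E ℂ)))
    (heig : ((entHam (rhoD Ψ)) ⊗ₖ (1 : Matrix E E ℂ) - L ⊗ₖ (1 : Matrix E E ℂ)) *ᵥ Ψ =
      (-γ : ℂ) • Ψ) (n : ℕ) :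
    ((entHam (rhoD Ψ)) ⊗ₖ (1 : Matrix E E ℂ)) ^ n *ᵥ Ψ =
      ((L - (γ : ℂ) • 1) ⊗ₖ (1 : Matrix E E ℂ)) ^ n *ᵥ Ψ := by
  classical
  -- matrix form of the state
  set ψ : Matrix D E ℂ := Matrix.of (fun d e => Ψ (d, e)) with hψ
  set σ : Matrix E E ℂ := ψᴴ * ψ with hσ
  have hρψ : rhoD Ψ * ψ = ψ * σ := by
    have hfac : rhoD Ψ = ψ * ψᴴ := by
      ext d d'
      simp [rhoD, Matrix.mul_apply, Matrix.conjTranspose_apply, hψ]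
    rw [hfac, hσ, Matrix.mul_assoc]
  -- polynomial giving the log
  obtain ⟨q, hq⟩ := EntHamAux.exists_poly_matLog (rhoD Ψ) hρ.1
  -- the boundary operator on E
  set Kb : Matrix E E ℂ := (Polynomial.aeval σ (-q))ᵀ with hKb
  have hK : entHam (rhoD Ψ) * ψ = ψ * Kbᵀ := by
    have : Polynomial.aeval (rhoD Ψ) (-q) * ψ = ψ * Polynomial.aeval σ (-q) :=
      EntHamAux.aeval_intertwine _ _ _ hρψ (-q)
    rw [hKb, Matrix.transpose_transpose, ← this, map_neg, hq]
    rfl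
  set M : Matrix (D × E) (D × E) ℂ := (entHam (rhoD Ψ)) ⊗ₖ (1 : Matrix E E ℂ) with hM
  set N : Matrix (D × E) (D × E) ℂ := (L - (γ : ℂ) • 1) ⊗ₖ (1 : Matrix E E ℂ) with hN
  -- M Ψ = (1 ⊗ Kb) Ψ
  have hMΨ : M *ᵥ Ψ = ((1 : Matrix D D ℂ) ⊗ₖ Kb) *ᵥ Ψ := by
    rw [hM, EntHamAux.kron_left, EntHamAux.kron_right, ← hψ, hK]
  -- M Ψ = N Ψ
  have hsubk : (L - (γ : ℂ) • 1) ⊗ₖ (1 : Matrix E E ℂ) =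
      L ⊗ₖ (1 : Matrix E E ℂ) - (γ : ℂ) • (1 : Matrix (D × E) (D × E) ℂ) := by
    ext p p'
    obtain ⟨d, e⟩ := p; obtain ⟨d', e'⟩ := p'
    simp only [Matrix.kroneckerMap_apply, Matrix.sub_apply, Matrix.smul_apply,
      Matrix.one_apply, Matrix.one_apply, smul_eq_mul, sub_mul, Prod.mk.injEq]
    by_cases h1 : d = d' <;> by_cases h2 : e = e' <;> simp [h1, h2, Matrix.one_apply]
  have hNΨ : M *ᵥ Ψ = N *ᵥ Ψ := by
    have h1 : M *ᵥ Ψ - (L ⊗ₖ (1 : Matrix E E ℂ)) *ᵥ Ψ = (-γ : ℂ) • Ψ := by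
      rw [← Matrix.sub_mulVec]; exact heig
    rw [hN, hsubk, Matrix.sub_mulVec, Matrix.smul_mulVec, Matrix.one_mulVec]
    rw [sub_eq_iff_eq_add] at h1
    rw [h1, neg_smul]
    abel
  -- commutation facts
  have hMc : Commute ((1 : Matrix D D ℂ) ⊗ₖ Kb) M := by
    rw [hM, Commute, SemiconjBy, ← Matrix.mul_kronecker_mul, ← Matrix.mul_kronecker_mul,
      mul_one, one_mul, mul_one, one_mul]
  have hNc : Commute ((1 : Matrix D D ℂ) ⊗ₖ Kb) N := by
    rw [hN, hsubk, Commute, SemiconjBy, mul_sub, sub_mul, ← (hcomm Kb)]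
    congr 1
    rw [mul_smul_comm, smul_mul_assoc, mul_one, one_mul]
  -- the induction
  induction n with
  | zero => simp
  | succ n ih =>
    have hKbM : (1 : Matrix D D ℂ) ⊗ₖ Kb * M ^ n = M ^ n * ((1 : Matrix D D ℂ) ⊗ₖ Kb) :=
      (hMc.pow_right n).eq
    have hKbN : (1 : Matrix D D ℂ) ⊗ₖ Kb * N ^ n = N ^ n * ((1 : Matrix D D ℂ) ⊗ₖ Kb) :=
      (hNc.pow_right n).eq
    calc M ^ (n + 1) *ᵥ Ψ = (M ^ n * M) *ᵥ Ψ := by rw [pow_succ]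
      _ = M ^ n *ᵥ (M *ᵥ Ψ) := (Matrix.mulVec_mulVec _ _ _).symm
      _ = M ^ n *ᵥ (((1 : Matrix D D ℂ) ⊗ₖ Kb) *ᵥ Ψ) := by rw [hMΨ]
      _ = (M ^ n * ((1 : Matrix D D ℂ) ⊗ₖ Kb)) *ᵥ Ψ := Matrix.mulVec_mulVec _ _ _
      _ = (((1 : Matrix D D ℂ) ⊗ₖ Kb) * M ^ n) *ᵥ Ψ := by rw [hKbM]
      _ = ((1 : Matrix D D ℂ) ⊗ₖ Kb) *ᵥ (M ^ n *ᵥ Ψ) := (Matrix.mulVec_mulVec _ _ _).symm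
      _ = ((1 : Matrix D D ℂ) ⊗ₖ Kb) *ᵥ (N ^ n *ᵥ Ψ) := by rw [ih]
      _ = (((1 : Matrix D D ℂ) ⊗ₖ Kb) * N ^ n) *ᵥ Ψ := Matrix.mulVec_mulVec _ _ _
      _ = (N ^ n * ((1 : Matrix D D ℂ) ⊗ₖ Kb)) *ᵥ Ψ := by rw [hKbN]
      _ = N ^ n *ᵥ (((1 : Matrix D D ℂ) ⊗ₖ Kb) *ᵥ Ψ) := (Matrix.mulVec_mulVec _ _ _).symm
      _ = N ^ n *ᵥ (M *ᵥ Ψ) := by rw [← hMΨ]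
      _ = N ^ n *ᵥ (N *ᵥ Ψ) := by rw [hNΨ]
      _ = (N ^ n * N) *ᵥ Ψ := Matrix.mulVec_mulVec _ _ _
      _ = N ^ (n + 1) *ᵥ Ψ := by rw [← pow_succ]
end
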